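/- Let G be an undirected irreflexive graph with edge (u,v). For vertices a, b both not in {u,v} and both lying in the same one of the three sets A := N_G(u) ∩ N_G(v), B := (N_G(u) \ N_G(v)) \ {v}, C := (N_G(v) \ N_G(u)) \ {u}, or with at least one of a, b outside A ∪ B ∪ C ∪ {u,v}, the adjacency of a and b in G ∧ uv is the same as in G. -/

import Mathlib

/-- Local complementation of `G` about `u`: edges between distinct neighbours of `u`
are complemented, all other adjacencies preserved. -/
def localComp {V : Type*} (G : SimpleGraph V) (u : V) : SimpleGraph V where
  Adj a b := (G.Adj a b ∧ ¬(G.Adj u a ∧ G.Adj u b ∧ a ≠ b)) ∨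
             (¬ G.Adj a b ∧ (G.Adj u a ∧ G.Adj u b ∧ a ≠ b))
  symm := by
    constructor
    intro a b h
    rcases h with ⟨h1, h2⟩ | ⟨h1, h2, h3, h4⟩
    · exact Or.inl ⟨h1.symm, fun ⟨x, y, z⟩ => h2 ⟨y, x, z.symm⟩⟩
    · exact Or.inr ⟨fun hc => h1 hc.symm, h3, h2, h4.symm⟩
  loopless := by
    constructor
    intro a h
    rcases h with ⟨h1, _⟩ | ⟨_, _, _, h4⟩
    · exact G.ne_of_adj h1 rfl
    · exact h4 rfl


/-- Pivot of G about the edge (u,v). -/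
def pivot {V : Type*} (G : SimpleGraph V) (u v : V) : SimpleGraph V :=
  localComp (localComp (localComp G u) v) u
/-! Read over `𝔽₂`, with `uₓ`, `vₓ` the adjacency of `x` to `u`, `v`: for `a, b ∉ {u, v}` the three
local complementations add `u_a u_b + (u_a + v_a)(u_b + v_b) + v_a v_b = u_a v_b + v_a u_b`
to the adjacency of `a` and `b`, since `G ⋆ u` makes `v` adjacent to `N(u) Δ N(v)` and
`G ⋆ u ⋆ v` makes `u` adjacent to `N(v)`. This correction vanishes when `a` and `b` have the
same adjacency pattern to `u` and `v`. A vertex adjacent to neither `u` nor `v` stays so through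
all three steps, so none of its adjacencies is ever touched. -/

theorem xor_and_xor_xor (p q r s t : Prop) :
    Xor (Xor (Xor t (p ∧ q)) (Xor r p ∧ Xor s q)) (r ∧ s) ↔ Xor t (Xor (p ∧ s) (r ∧ q)) := by
  by_cases p <;> by_cases q <;> by_cases r <;> by_cases s <;> by_cases t <;> simp_all [xor_comm]

section

variable {V : Type*} {G : SimpleGraph V} {u v a b : V}

theorem localComp_adj :
    (localComp G u).Adj a b ↔ Xor (G.Adj a b) (G.Adj u a ∧ G.Adj u b ∧ a ≠ b) := by
  rw [localComp, Xor]
  tauto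

theorem localComp_adj_of_not_adj (ha : ¬G.Adj u a) : (localComp G u).Adj a b ↔ G.Adj a b := by
  simp [localComp_adj, ha, xor_comm]

theorem localComp_adj_self_left : (localComp G u).Adj u b ↔ G.Adj u b :=
  localComp_adj_of_not_adj G.irrefl

theorem localComp_adj_of_adj (huv : G.Adj u v) (hav : a ≠ v) :
    (localComp G u).Adj v a ↔ Xor (G.Adj v a) (G.Adj u a) := by
  simp [localComp_adj, huv, hav.symm]

theorem localComp_localComp_adj_self_left (huv : G.Adj u v) (hau : a ≠ u) (hav : a ≠ v) :
    (localComp (localComp G u) v).Adj u a ↔ G.Adj v a := by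
  have hvu₁ : (localComp G u).Adj v u := by
    rw [SimpleGraph.adj_comm, localComp_adj_self_left]
    exact huv
  rw [localComp_adj, localComp_adj_self_left, localComp_adj_of_adj huv hav]
  simp only [hvu₁, ne_eq, hau.symm, not_false_eq_true, true_and, Xor]
  tauto

theorem pivot_adj (huv : G.Adj u v) (hau : a ≠ u) (hav : a ≠ v) (hbu : b ≠ u) (hbv : b ≠ v) :
    (pivot G u v).Adj a b ↔
      Xor (G.Adj a b) (Xor (G.Adj u a ∧ G.Adj v b) (G.Adj v a ∧ G.Adj u b)) := by
  rw [pivot, localComp_adj, localComp_localComp_adj_self_left huv hau hav,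
    localComp_localComp_adj_self_left huv hbu hbv, localComp_adj, localComp_adj_of_adj huv hav,
    localComp_adj_of_adj huv hbv, localComp_adj]
  by_cases hab : a = b
  · subst hab
    simp [and_comm]
  · simp only [ne_eq, hab, not_false_eq_true, and_true]
    exact xor_and_xor_xor _ _ _ _ _

theorem pivot_adj_of_not_adj (hua : ¬G.Adj u a) (hva : ¬G.Adj v a) :
    (pivot G u v).Adj a b ↔ G.Adj a b := by
  have hva₁ : ¬(localComp G u).Adj v a := by
    rwa [SimpleGraph.adj_comm, localComp_adj_of_not_adj hua, SimpleGraph.adj_comm]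
  have hua₂ : ¬(localComp (localComp G u) v).Adj u a := by
    rwa [SimpleGraph.adj_comm, localComp_adj_of_not_adj hva₁, SimpleGraph.adj_comm,
      localComp_adj_self_left]
  rw [pivot, localComp_adj_of_not_adj hua₂, localComp_adj_of_not_adj hva₁,
    localComp_adj_of_not_adj hua]

theorem adj_iff_of_mem_of_mem {S : Set V}
    (hS : S ∈ ({G.neighborSet u ∩ G.neighborSet v, (G.neighborSet u \ G.neighborSet v) \ {v},
      (G.neighborSet v \ G.neighborSet u) \ {u}} : Set (Set V)))
    (ha : a ∈ S) (hb : b ∈ S) : (G.Adj u a ↔ G.Adj u b) ∧ (G.Adj v a ↔ G.Adj v b) := by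
  simp only [Set.mem_insert_iff, Set.mem_singleton_iff] at hS
  rcases hS with rfl | rfl | rfl <;>
    simp only [Set.mem_inter_iff, Set.mem_sdiff, SimpleGraph.mem_neighborSet] at ha hb <;>
    tauto

theorem not_adj_of_not_mem
    (ha : a ∉ G.neighborSet u ∩ G.neighborSet v ∪ (G.neighborSet u \ G.neighborSet v) \ {v} ∪
      (G.neighborSet v \ G.neighborSet u) \ {u} ∪ {u, v}) :
    ¬G.Adj u a ∧ ¬G.Adj v a := by
  simp only [Set.mem_union, Set.mem_inter_iff, Set.mem_sdiff, SimpleGraph.mem_neighborSet,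
    Set.mem_insert_iff, Set.mem_singleton_iff] at ha
  tauto

end

/-- Adjacency within one of the sets A, B, C (away from u and v), or involving a
vertex outside A ∪ B ∪ C ∪ {u, v}, is unchanged by the pivot. -/
theorem pivot_adj_unchanged {V : Type*} (G : SimpleGraph V) (u v : V)
    (huv : G.Adj u v)
    (A B C : Set V)
    (hA : A = G.neighborSet u ∩ G.neighborSet v)
    (hB : B = (G.neighborSet u \ G.neighborSet v) \ {v})
    (hC : C = (G.neighborSet v \ G.neighborSet u) \ {u}) :
    ∀ a b : V,
      ((∃ S ∈ ({A, B, C} : Set (Set V)), a ∈ S ∧ b ∈ S ∧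
          a ∉ ({u, v} : Set V) ∧ b ∉ ({u, v} : Set V)) ∨
        a ∉ A ∪ B ∪ C ∪ {u, v} ∨ b ∉ A ∪ B ∪ C ∪ {u, v}) →
      ((pivot G u v).Adj a b ↔ G.Adj a b) := by
  subst hA hB hC
  rintro a b (⟨S, hS, ha, hb, ha', hb'⟩ | ha | hb)
  · simp only [Set.mem_insert_iff, Set.mem_singleton_iff, not_or] at ha' hb'
    obtain ⟨hua, hva⟩ := adj_iff_of_mem_of_mem hS ha hb
    rw [pivot_adj huv ha'.1 ha'.2 hb'.1 hb'.2, hua, hva, and_comm, xor_self, xor_comm, xor_false,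
      id]
  · exact pivot_adj_of_not_adj (not_adj_of_not_mem ha).1 (not_adj_of_not_mem ha).2
  · obtain ⟨hub, hvb⟩ := not_adj_of_not_mem hb
    rw [SimpleGraph.adj_comm, G.adj_comm]
    exact pivot_adj_of_not_adj hub hvb
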